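/- arXiv:1904.07696 — 2 statements merged into one kernel-verified Lean document; each statement's English description precedes it below -/
import Mathlib

section
/- Let β₁ = (1 6)(2 5)(3 4)(7 9)(10 11), β₂ = (0 6 1)(2 8 5)(3 7 10)(4 11 9), β₃ = (0 8)(1 7)(2 4)(3 5)(6 9)(10 11), β₄ = (0 10)(1 4)(2 7)(3 9)(5 6)(8 11) be permutations of {0,…,11}. Then the subgroup of the symmetric group on 12 letters generated by {β₁, β₂, β₃, β₄} has exactly 24 elements and is isomorphic to the symmetric group S₄. -/
open Equiv

/-- β₁ = (1 6)(2 5)(3 4)(7 9)(10 11) -/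
def kno2Beta1 : Equiv.Perm (Fin 12) :=
  swap 1 6 * swap 2 5 * swap 3 4 * swap 7 9 * swap 10 11

/-- β₂ = (0 6 1)(2 8 5)(3 7 10)(4 11 9) -/
def kno2Beta2 : Equiv.Perm (Fin 12) :=
  (swap 0 6 * swap 6 1) * (swap 2 8 * swap 8 5) * (swap 3 7 * swap 7 10) *
    (swap 4 11 * swap 11 9)

/-- β₃ = (0 8)(1 7)(2 4)(3 5)(6 9)(10 11) -/
def kno2Beta3 : Equiv.Perm (Fin 12) :=
  swap 0 8 * swap 1 7 * swap 2 4 * swap 3 5 * swap 6 9 * swap 10 11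

/-- β₄ = (0 10)(1 4)(2 7)(3 9)(5 6)(8 11) -/
def kno2Beta4 : Equiv.Perm (Fin 12) :=
  swap 0 10 * swap 1 4 * swap 2 7 * swap 3 9 * swap 5 6 * swap 8 11

namespace Kno2Aux

def pfst : Fin 12 → Fin 4 := ![0, 0, 1, 1, 2, 2, 0, 3, 3, 3, 2, 1]
def psnd : Fin 12 → Fin 4 := ![3, 1, 0, 3, 3, 0, 2, 2, 0, 1, 1, 2]
def pinv : Fin 4 → Fin 4 → Fin 12 :=
  ![![0, 1, 6, 0], ![2, 0, 11, 3], ![5, 10, 0, 4], ![8, 9, 7, 0]]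

lemma pfst_ne_psnd : ∀ x : Fin 12, pfst x ≠ psnd x := by decide

lemma pfst_pinv : ∀ i j : Fin 4, i ≠ j → pfst (pinv i j) = i := by decide

lemma psnd_pinv : ∀ i j : Fin 4, i ≠ j → psnd (pinv i j) = j := by decide

lemma pinv_pfst_psnd : ∀ x : Fin 12, pinv (pfst x) (psnd x) = x := by decide

def act (σ : Perm (Fin 4)) (x : Fin 12) : Fin 12 :=
  pinv (σ (pfst x)) (σ (psnd x))

lemma act_act (σ τ : Perm (Fin 4)) (x : Fin 12) : act σ (act τ x) = act (σ * τ) x := by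
  have hne : τ (pfst x) ≠ τ (psnd x) := τ.injective.ne (pfst_ne_psnd x)
  unfold act
  rw [pfst_pinv _ _ hne, psnd_pinv _ _ hne, Perm.mul_apply, Perm.mul_apply]

lemma act_one (x : Fin 12) : act 1 x = x := by
  unfold act
  simpa using pinv_pfst_psnd x

def Ψ : Perm (Fin 4) →* Perm (Fin 12) where
  toFun σ :=
    { toFun := act σ
      invFun := act σ⁻¹
      left_inv := fun x => by rw [act_act, inv_mul_cancel, act_one]
      right_inv := fun x => by rw [act_act, mul_inv_cancel, act_one] }
  map_one' := Equiv.ext fun x => act_one x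
  map_mul' σ τ := Equiv.ext fun x => (act_act σ τ x).symm

lemma Ψ_apply (σ : Perm (Fin 4)) (x : Fin 12) : Ψ σ x = act σ x := rfl

lemma Ψ_injective : Function.Injective Ψ := by
  refine (injective_iff_map_eq_one Ψ).2 fun σ h => ?_
  have key : ∀ x : Fin 12, σ (pfst x) = pfst x := by
    intro x
    have hx : act σ x = x := by
      have := Equiv.ext_iff.mp h x
      simpa [Ψ_apply] using this
    have hne : σ (pfst x) ≠ σ (psnd x) := σ.injective.ne (pfst_ne_psnd x)
    have := congrArg pfst hx
    rwa [act, pfst_pinv _ _ hne] at this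
  have h0 := key 0
  have h1 := key 2
  have h2 := key 4
  have h3 := key 7
  have e0 : pfst 0 = 0 := by decide
  have e1 : pfst 2 = 1 := by decide
  have e2 : pfst 4 = 2 := by decide
  have e3 : pfst 7 = 3 := by decide
  rw [e0] at h0; rw [e1] at h1; rw [e2] at h2; rw [e3] at h3
  apply Equiv.ext
  intro i
  fin_cases i
  · exact h0
  · exact h1
  · exact h2
  · exact h3

lemma Ψ_swap_mem (x y : Fin 4) (hxy : x ≠ y) :
    Ψ (swap x y) ∈ Subgroup.closure
      ({kno2Beta1, kno2Beta2, kno2Beta3, kno2Beta4} : Set (Equiv.Perm (Fin 12))) := by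
  have m1 : kno2Beta1 ∈ Subgroup.closure
      ({kno2Beta1, kno2Beta2, kno2Beta3, kno2Beta4} : Set (Equiv.Perm (Fin 12))) :=
    Subgroup.subset_closure (by simp)
  have m2 : kno2Beta2 ∈ Subgroup.closure
      ({kno2Beta1, kno2Beta2, kno2Beta3, kno2Beta4} : Set (Equiv.Perm (Fin 12))) :=
    Subgroup.subset_closure (by simp)
  have m3 : kno2Beta3 ∈ Subgroup.closure
      ({kno2Beta1, kno2Beta2, kno2Beta3, kno2Beta4} : Set (Equiv.Perm (Fin 12))) :=
    Subgroup.subset_closure (by simp)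
  have m4 : kno2Beta4 ∈ Subgroup.closure
      ({kno2Beta1, kno2Beta2, kno2Beta3, kno2Beta4} : Set (Equiv.Perm (Fin 12))) :=
    Subgroup.subset_closure (by simp)
  have w01 : Ψ (swap 0 1) = kno2Beta2 * kno2Beta4 * kno2Beta1 := Equiv.ext (by decide)
  have w02 : Ψ (swap 0 2) = kno2Beta1 * kno2Beta2 * kno2Beta4 := Equiv.ext (by decide)
  have w03 : Ψ (swap 0 3) = kno2Beta1 * kno2Beta3 := Equiv.ext (by decide)
  have w12 : Ψ (swap 1 2) = kno2Beta1 := Equiv.ext (by decide)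
  have w13 : Ψ (swap 1 3) = kno2Beta1 * kno2Beta2 := Equiv.ext (by decide)
  have w23 : Ψ (swap 2 3) = kno2Beta2 * kno2Beta1 := Equiv.ext (by decide)
  fin_cases x <;> fin_cases y <;>
    first
      | exact absurd rfl hxy
      | (show Ψ (swap 0 1) ∈ _; rw [w01]; exact mul_mem (mul_mem m2 m4) m1)
      | (show Ψ (swap 1 0) ∈ _; rw [swap_comm, w01]; exact mul_mem (mul_mem m2 m4) m1)
      | (show Ψ (swap 0 2) ∈ _; rw [w02]; exact mul_mem (mul_mem m1 m2) m4)
      | (show Ψ (swap 2 0) ∈ _; rw [swap_comm, w02]; exact mul_mem (mul_mem m1 m2) m4)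
      | (show Ψ (swap 0 3) ∈ _; rw [w03]; exact mul_mem m1 m3)
      | (show Ψ (swap 3 0) ∈ _; rw [swap_comm, w03]; exact mul_mem m1 m3)
      | (show Ψ (swap 1 2) ∈ _; rw [w12]; exact m1)
      | (show Ψ (swap 2 1) ∈ _; rw [swap_comm, w12]; exact m1)
      | (show Ψ (swap 1 3) ∈ _; rw [w13]; exact mul_mem m1 m2)
      | (show Ψ (swap 3 1) ∈ _; rw [swap_comm, w13]; exact mul_mem m1 m2)
      | (show Ψ (swap 2 3) ∈ _; rw [w23]; exact mul_mem m2 m1)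
      | (show Ψ (swap 3 2) ∈ _; rw [swap_comm, w23]; exact mul_mem m2 m1)

lemma range_eq : Ψ.range = Subgroup.closure
    ({kno2Beta1, kno2Beta2, kno2Beta3, kno2Beta4} : Set (Equiv.Perm (Fin 12))) := by
  apply le_antisymm
  · rintro g ⟨σ, rfl⟩
    refine Equiv.Perm.swap_induction_on σ (by simpa using Subgroup.one_mem _)
      (fun f x y hxy ih => ?_)
    rw [map_mul]
    exact mul_mem (Ψ_swap_mem x y hxy) ih
  · rw [Subgroup.closure_le]
    rintro g (rfl | rfl | rfl | rfl)
    · exact ⟨swap 1 2, Equiv.ext (by decide)⟩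
    · exact ⟨swap 1 3 * swap 3 2, Equiv.ext (by decide)⟩
    · exact ⟨swap 0 3 * swap 1 2, Equiv.ext (by decide)⟩
    · exact ⟨swap 0 2 * swap 1 3, Equiv.ext (by decide)⟩

end Kno2Aux

theorem stmt9 :
    Nat.card (Subgroup.closure
        ({kno2Beta1, kno2Beta2, kno2Beta3, kno2Beta4} : Set (Equiv.Perm (Fin 12)))) = 24 ∧
    Nonempty ((Subgroup.closure
        ({kno2Beta1, kno2Beta2, kno2Beta3, kno2Beta4} : Set (Equiv.Perm (Fin 12)))) ≃*
      Equiv.Perm (Fin 4)) := by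
  have e : Kno2Aux.Ψ.range ≃* Equiv.Perm (Fin 4) :=
    (MonoidHom.ofInjective Kno2Aux.Ψ_injective).symm
  rw [← Kno2Aux.range_eq]
  refine ⟨?_, ⟨e⟩⟩
  rw [Nat.card_congr e.toEquiv]
  simp [Nat.card_eq_fintype_card, Fintype.card_perm]
  rfl
end

section
/- Let β₁ = (1 6)(2 5)(3 4)(7 9)(10 11), β₂ = (0 6 1)(2 8 5)(3 7 10)(4 11 9), β₃ = (0 8)(1 7)(2 4)(3 5)(6 9)(10 11), β₄ = (0 10)(1 4)(2 7)(3 9)(5 6)(8 11) be permutations of {0,…,11}. Then the subgroup generated by {β₁, β₂, β₃, β₄} acts transitively on {0,…,11}. -/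
open Equiv

private def H : Subgroup (Equiv.Perm (Fin 12)) :=
  Subgroup.closure ({kno2Beta1, kno2Beta2, kno2Beta3, kno2Beta4} : Set (Equiv.Perm (Fin 12)))

private lemma m1 : kno2Beta1 ∈ H := Subgroup.subset_closure (by simp)
private lemma m2 : kno2Beta2 ∈ H := Subgroup.subset_closure (by simp)
private lemma m3 : kno2Beta3 ∈ H := Subgroup.subset_closure (by simp)
private lemma m4 : kno2Beta4 ∈ H := Subgroup.subset_closure (by simp)

private lemma trans0 : ∀ j : Fin 12, ∃ g ∈ H, g 0 = j := by
  intro j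
  fin_cases j
  · exact ⟨1, one_mem H, by decide⟩
  · exact ⟨kno2Beta1 * kno2Beta2, mul_mem m1 m2, by decide⟩
  · exact ⟨kno2Beta1 * kno2Beta4 * kno2Beta2, mul_mem (mul_mem m1 m4) m2, by decide⟩
  · exact ⟨kno2Beta2 * kno2Beta4, mul_mem m2 m4, by decide⟩
  · exact ⟨kno2Beta4 * kno2Beta1 * kno2Beta2, mul_mem (mul_mem m4 m1) m2, by decide⟩
  · exact ⟨kno2Beta4 * kno2Beta2, mul_mem m4 m2, by decide⟩
  · exact ⟨kno2Beta2, m2, by decide⟩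
  · exact ⟨kno2Beta3 * kno2Beta1 * kno2Beta2, mul_mem (mul_mem m3 m1) m2, by decide⟩
  · exact ⟨kno2Beta3, m3, by decide⟩
  · exact ⟨kno2Beta3 * kno2Beta2, mul_mem m3 m2, by decide⟩
  · exact ⟨kno2Beta4, m4, by decide⟩
  · exact ⟨kno2Beta4 * kno2Beta3, mul_mem m4 m3, by decide⟩

theorem stmt10 : ∀ i j : Fin 12, ∃ g ∈ Subgroup.closure
    ({kno2Beta1, kno2Beta2, kno2Beta3, kno2Beta4} : Set (Equiv.Perm (Fin 12))),
    g i = j := by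
  intro i j
  obtain ⟨g, hg, hg0⟩ := trans0 i
  obtain ⟨h, hh, hh0⟩ := trans0 j
  exact ⟨h * g⁻¹, mul_mem hh (inv_mem hg), by simp [← hg0, hh0]⟩
end
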